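/- Let β be a 2-form, θ a 1-form and T a 3-form on ℝ^8 satisfying β_{st}Φ_{stlm} = 2θ_kT_{klm} − θ_pT_{pst}Φ_{stlm} for all l,m. Then β_{ij} = −(1/3) θ_sT_{sij} + (1/6) θ_sT_{sab}Φ_{abij} = −(1/6) β_{ab}Φ_{abij} for all i,j; in particular β_{ab}Φ_{abij} = −6β_{ij}, i.e., β lies in Λ²₇. -/

import Mathlib

/-!
We work in ℝ⁸ with the standard basis `e₀, …, e₇`.  A `k`-form is a totally antisymmetric
map `(Fin 8)^k → ℝ`; repeated indices are summed over `Fin 8` and `kd` is the Kronecker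
delta.  `Phi` is the fundamental 4-form of the standard `Spin(7)`-structure on ℝ⁸,
`Φ = -e₀₁₂₇ + e₀₂₃₆ - e₀₃₄₇ - e₀₅₆₇ + e₀₁₄₆ + e₀₂₄₅ - e₀₁₃₅
     - e₃₄₅₆ - e₁₄₅₇ - e₁₂₅₆ - e₁₂₃₄ - e₂₃₅₇ - e₁₃₆₇ + e₂₄₆₇`.
-/

noncomputable section

/-- Kronecker delta on `Fin 8`. -/
def kd (a b : Fin 8) : ℝ := if a = b then 1 else 0

/-- Component at the indices `(i,j,k,l)` of the wedge product `e_a ∧ e_b ∧ e_c ∧ e_d`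
of standard coordinate 1-forms, normalized so that `(e_a ∧ e_b ∧ e_c ∧ e_d)_{abcd} = 1`;
it is the alternating sum of products of Kronecker deltas. -/
def wedge4 (a b c d i j k l : Fin 8) : ℝ :=
  Matrix.det !![kd a i, kd a j, kd a k, kd a l;
                kd b i, kd b j, kd b k, kd b l;
                kd c i, kd c j, kd c k, kd c l;
                kd d i, kd d j, kd d k, kd d l]

/-- The fundamental 4-form `Φ` of the standard `Spin(7)`-structure on `ℝ⁸`, in components:
the totally antisymmetric 4-tensor with `Φ_{0127} = -1`, `Φ_{0236} = 1`, `Φ_{0347} = -1`,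
`Φ_{0567} = -1`, `Φ_{0146} = 1`, `Φ_{0245} = 1`, `Φ_{0135} = -1`, `Φ_{3456} = -1`,
`Φ_{1457} = -1`, `Φ_{1256} = -1`, `Φ_{1234} = -1`, `Φ_{2357} = -1`, `Φ_{1367} = -1`,
`Φ_{2467} = 1`, all components not obtained from these by permutation being zero. -/
def Phi (i j k l : Fin 8) : ℝ :=
    -wedge4 0 1 2 7 i j k l + wedge4 0 2 3 6 i j k l - wedge4 0 3 4 7 i j k l
  - wedge4 0 5 6 7 i j k l + wedge4 0 1 4 6 i j k l + wedge4 0 2 4 5 i j k l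
  - wedge4 0 1 3 5 i j k l - wedge4 3 4 5 6 i j k l - wedge4 1 4 5 7 i j k l
  - wedge4 1 2 5 6 i j k l - wedge4 1 2 3 4 i j k l - wedge4 2 3 5 7 i j k l
  - wedge4 1 3 6 7 i j k l + wedge4 2 4 6 7 i j k l

def kdZ (a b : Fin 8) : ℤ := if a = b then 1 else 0

def wedge4Z (a b c d i j k l : Fin 8) : ℤ :=
    kdZ a i * (kdZ b j * (kdZ c k * kdZ d l - kdZ c l * kdZ d k) - kdZ b k * (kdZ c j * kdZ d l - kdZ c l * kdZ d j) + kdZ b l * (kdZ c j * kdZ d k - kdZ c k * kdZ d j))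
  - kdZ a j * (kdZ b i * (kdZ c k * kdZ d l - kdZ c l * kdZ d k) - kdZ b k * (kdZ c i * kdZ d l - kdZ c l * kdZ d i) + kdZ b l * (kdZ c i * kdZ d k - kdZ c k * kdZ d i))
  + kdZ a k * (kdZ b i * (kdZ c j * kdZ d l - kdZ c l * kdZ d j) - kdZ b j * (kdZ c i * kdZ d l - kdZ c l * kdZ d i) + kdZ b l * (kdZ c i * kdZ d j - kdZ c j * kdZ d i))
  - kdZ a l * (kdZ b i * (kdZ c j * kdZ d k - kdZ c k * kdZ d j) - kdZ b j * (kdZ c i * kdZ d k - kdZ c k * kdZ d i) + kdZ b k * (kdZ c i * kdZ d j - kdZ c j * kdZ d i))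

def PhiZ (i j k l : Fin 8) : ℤ :=
    -wedge4Z 0 1 2 7 i j k l + wedge4Z 0 2 3 6 i j k l - wedge4Z 0 3 4 7 i j k l
  - wedge4Z 0 5 6 7 i j k l + wedge4Z 0 1 4 6 i j k l + wedge4Z 0 2 4 5 i j k l
  - wedge4Z 0 1 3 5 i j k l - wedge4Z 3 4 5 6 i j k l - wedge4Z 1 4 5 7 i j k l
  - wedge4Z 1 2 5 6 i j k l - wedge4Z 1 2 3 4 i j k l - wedge4Z 2 3 5 7 i j k l
  - wedge4Z 1 3 6 7 i j k l + wedge4Z 2 4 6 7 i j k l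

def phiT : Fin 8 → Fin 8 → Fin 8 → Fin 8 → ℤ :=
  ![![![![0,0,0,0,0,0,0,0],![0,0,0,0,0,0,0,0],![0,0,0,0,0,0,0,0],![0,0,0,0,0,0,0,0],![0,0,0,0,0,0,0,0],![0,0,0,0,0,0,0,0],![0,0,0,0,0,0,0,0],![0,0,0,0,0,0,0,0]],![![0,0,0,0,0,0,0,0],![0,0,0,0,0,0,0,0],![0,0,0,0,0,0,0,(-1)],![0,0,0,0,0,(-1),0,0],![0,0,0,0,0,0,1,0],![0,0,0,1,0,0,0,0],![0,0,0,0,(-1),0,0,0],![0,0,1,0,0,0,0,0]],![![0,0,0,0,0,0,0,0],![0,0,0,0,0,0,0,1],![0,0,0,0,0,0,0,0],![0,0,0,0,0,0,1,0],![0,0,0,0,0,1,0,0],![0,0,0,0,(-1),0,0,0],![0,0,0,(-1),0,0,0,0],![0,(-1),0,0,0,0,0,0]],![![0,0,0,0,0,0,0,0],![0,0,0,0,0,1,0,0],![0,0,0,0,0,0,(-1),0],![0,0,0,0,0,0,0,0],![0,0,0,0,0,0,0,(-1)],![0,(-1),0,0,0,0,0,0],![0,0,1,0,0,0,0,0],!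[0,0,0,0,1,0,0,0]],![![0,0,0,0,0,0,0,0],![0,0,0,0,0,0,(-1),0],![0,0,0,0,0,(-1),0,0],![0,0,0,0,0,0,0,1],![0,0,0,0,0,0,0,0],![0,0,1,0,0,0,0,0],![0,1,0,0,0,0,0,0],![0,0,0,(-1),0,0,0,0]],![![0,0,0,0,0,0,0,0],![0,0,0,(-1),0,0,0,0],![0,0,0,0,1,0,0,0],![0,1,0,0,0,0,0,0],![0,0,(-1),0,0,0,0,0],![0,0,0,0,0,0,0,0],![0,0,0,0,0,0,0,(-1)],![0,0,0,0,0,0,1,0]],![![0,0,0,0,0,0,0,0],![0,0,0,0,1,0,0,0],![0,0,0,1,0,0,0,0],![0,0,(-1),0,0,0,0,0],![0,(-1),0,0,0,0,0,0],![0,0,0,0,0,0,0,1],![0,0,0,0,0,0,0,0],![0,0,0,0,0,(-1),0,0]],![![0,0,0,0,0,0,0,0],![0,0,(-1),0,0,0,0,0],![0,1,0,0,0,0,0,0],![0,0,0,0,(-1),0,0,0],![0,0,0,1,0,0,0,0],![0,0,0,0,0,0,(-1),0],![0,0,0,0,0,1,0,0],![0,0,0,0,0,0,0,0]]],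
  ![![![0,0,0,0,0,0,0,0],![0,0,0,0,0,0,0,0],![0,0,0,0,0,0,0,1],![0,0,0,0,0,1,0,0],![0,0,0,0,0,0,(-1),0],![0,0,0,(-1),0,0,0,0],![0,0,0,0,1,0,0,0],![0,0,(-1),0,0,0,0,0]],![![0,0,0,0,0,0,0,0],![0,0,0,0,0,0,0,0],![0,0,0,0,0,0,0,0],![0,0,0,0,0,0,0,0],![0,0,0,0,0,0,0,0],![0,0,0,0,0,0,0,0],![0,0,0,0,0,0,0,0],![0,0,0,0,0,0,0,0]],![![0,0,0,0,0,0,0,(-1)],![0,0,0,0,0,0,0,0],![0,0,0,0,0,0,0,0],![0,0,0,0,(-1),0,0,0],![0,0,0,1,0,0,0,0],![0,0,0,0,0,0,(-1),0],![0,0,0,0,0,1,0,0],![1,0,0,0,0,0,0,0]],![![0,0,0,0,0,(-1),0,0],![0,0,0,0,0,0,0,0],![0,0,0,0,1,0,0,0],![0,0,0,0,0,0,0,0],![0,0,(-1),0,0,0,0,0],![1,0,0,0,0,0,0,0],![0,0,0,0,0,0,0,(-1)],![0,0,0,0,0,0,1,0]],![![0,0,0,0,0,0,1,0],![0,0,0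,0,0,0,0,0],![0,0,0,(-1),0,0,0,0],![0,0,1,0,0,0,0,0],![0,0,0,0,0,0,0,0],![0,0,0,0,0,0,0,(-1)],![(-1),0,0,0,0,0,0,0],![0,0,0,0,0,1,0,0]],![![0,0,0,1,0,0,0,0],![0,0,0,0,0,0,0,0],![0,0,0,0,0,0,1,0],![(-1),0,0,0,0,0,0,0],![0,0,0,0,0,0,0,1],![0,0,0,0,0,0,0,0],![0,0,(-1),0,0,0,0,0],![0,0,0,0,(-1),0,0,0]],![![0,0,0,0,(-1),0,0,0],![0,0,0,0,0,0,0,0],![0,0,0,0,0,(-1),0,0],![0,0,0,0,0,0,0,1],![1,0,0,0,0,0,0,0],![0,0,1,0,0,0,0,0],![0,0,0,0,0,0,0,0],![0,0,0,(-1),0,0,0,0]],![![0,0,1,0,0,0,0,0],![0,0,0,0,0,0,0,0],![(-1),0,0,0,0,0,0,0],![0,0,0,0,0,0,(-1),0],![0,0,0,0,0,(-1),0,0],![0,0,0,0,1,0,0,0],![0,0,0,1,0,0,0,0],![0,0,0,0,0,0,0,0]]],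
  ![![![0,0,0,0,0,0,0,0],![0,0,0,0,0,0,0,(-1)],![0,0,0,0,0,0,0,0],![0,0,0,0,0,0,(-1),0],![0,0,0,0,0,(-1),0,0],![0,0,0,0,1,0,0,0],![0,0,0,1,0,0,0,0],![0,1,0,0,0,0,0,0]],![![0,0,0,0,0,0,0,1],![0,0,0,0,0,0,0,0],![0,0,0,0,0,0,0,0],![0,0,0,0,1,0,0,0],![0,0,0,(-1),0,0,0,0],![0,0,0,0,0,0,1,0],![0,0,0,0,0,(-1),0,0],![(-1),0,0,0,0,0,0,0]],![![0,0,0,0,0,0,0,0],![0,0,0,0,0,0,0,0],![0,0,0,0,0,0,0,0],![0,0,0,0,0,0,0,0],![0,0,0,0,0,0,0,0],![0,0,0,0,0,0,0,0],![0,0,0,0,0,0,0,0],![0,0,0,0,0,0,0,0]],![![0,0,0,0,0,0,1,0],![0,0,0,0,(-1),0,0,0],![0,0,0,0,0,0,0,0],![0,0,0,0,0,0,0,0],![0,1,0,0,0,0,0,0],![0,0,0,0,0,0,0,(-1)],![(-1),0,0,0,0,0,0,0],![0,0,0,0,0,1,0,0]],![![0,0,0,0,0,1,0,0],![0,0,0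,1,0,0,0,0],![0,0,0,0,0,0,0,0],![0,(-1),0,0,0,0,0,0],![0,0,0,0,0,0,0,0],![(-1),0,0,0,0,0,0,0],![0,0,0,0,0,0,0,1],![0,0,0,0,0,0,(-1),0]],![![0,0,0,0,(-1),0,0,0],![0,0,0,0,0,0,(-1),0],![0,0,0,0,0,0,0,0],![0,0,0,0,0,0,0,1],![1,0,0,0,0,0,0,0],![0,0,0,0,0,0,0,0],![0,1,0,0,0,0,0,0],![0,0,0,(-1),0,0,0,0]],![![0,0,0,(-1),0,0,0,0],![0,0,0,0,0,1,0,0],![0,0,0,0,0,0,0,0],![1,0,0,0,0,0,0,0],![0,0,0,0,0,0,0,(-1)],![0,(-1),0,0,0,0,0,0],![0,0,0,0,0,0,0,0],![0,0,0,0,1,0,0,0]],![![0,(-1),0,0,0,0,0,0],![1,0,0,0,0,0,0,0],![0,0,0,0,0,0,0,0],![0,0,0,0,0,(-1),0,0],![0,0,0,0,0,0,1,0],![0,0,0,1,0,0,0,0],![0,0,0,0,(-1),0,0,0],![0,0,0,0,0,0,0,0]]],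
  ![![![0,0,0,0,0,0,0,0],![0,0,0,0,0,(-1),0,0],![0,0,0,0,0,0,1,0],![0,0,0,0,0,0,0,0],![0,0,0,0,0,0,0,1],![0,1,0,0,0,0,0,0],![0,0,(-1),0,0,0,0,0],![0,0,0,0,(-1),0,0,0]],![![0,0,0,0,0,1,0,0],![0,0,0,0,0,0,0,0],![0,0,0,0,(-1),0,0,0],![0,0,0,0,0,0,0,0],![0,0,1,0,0,0,0,0],![(-1),0,0,0,0,0,0,0],![0,0,0,0,0,0,0,1],![0,0,0,0,0,0,(-1),0]],![![0,0,0,0,0,0,(-1),0],![0,0,0,0,1,0,0,0],![0,0,0,0,0,0,0,0],![0,0,0,0,0,0,0,0],![0,(-1),0,0,0,0,0,0],![0,0,0,0,0,0,0,1],![1,0,0,0,0,0,0,0],![0,0,0,0,0,(-1),0,0]],![![0,0,0,0,0,0,0,0],![0,0,0,0,0,0,0,0],![0,0,0,0,0,0,0,0],![0,0,0,0,0,0,0,0],![0,0,0,0,0,0,0,0],![0,0,0,0,0,0,0,0],![0,0,0,0,0,0,0,0],![0,0,0,0,0,0,0,0]],![![0,0,0,0,0,0,0,(-1)],![0,0,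(-1),0,0,0,0,0],![0,1,0,0,0,0,0,0],![0,0,0,0,0,0,0,0],![0,0,0,0,0,0,0,0],![0,0,0,0,0,0,(-1),0],![0,0,0,0,0,1,0,0],![1,0,0,0,0,0,0,0]],![![0,(-1),0,0,0,0,0,0],![1,0,0,0,0,0,0,0],![0,0,0,0,0,0,0,(-1)],![0,0,0,0,0,0,0,0],![0,0,0,0,0,0,1,0],![0,0,0,0,0,0,0,0],![0,0,0,0,(-1),0,0,0],![0,0,1,0,0,0,0,0]],![![0,0,1,0,0,0,0,0],![0,0,0,0,0,0,0,(-1)],![(-1),0,0,0,0,0,0,0],![0,0,0,0,0,0,0,0],![0,0,0,0,0,(-1),0,0],![0,0,0,0,1,0,0,0],![0,0,0,0,0,0,0,0],![0,1,0,0,0,0,0,0]],![![0,0,0,0,1,0,0,0],![0,0,0,0,0,0,1,0],![0,0,0,0,0,1,0,0],![0,0,0,0,0,0,0,0],![(-1),0,0,0,0,0,0,0],![0,0,(-1),0,0,0,0,0],![0,(-1),0,0,0,0,0,0],![0,0,0,0,0,0,0,0]]],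
  ![![![0,0,0,0,0,0,0,0],![0,0,0,0,0,0,1,0],![0,0,0,0,0,1,0,0],![0,0,0,0,0,0,0,(-1)],![0,0,0,0,0,0,0,0],![0,0,(-1),0,0,0,0,0],![0,(-1),0,0,0,0,0,0],![0,0,0,1,0,0,0,0]],![![0,0,0,0,0,0,(-1),0],![0,0,0,0,0,0,0,0],![0,0,0,1,0,0,0,0],![0,0,(-1),0,0,0,0,0],![0,0,0,0,0,0,0,0],![0,0,0,0,0,0,0,1],![1,0,0,0,0,0,0,0],![0,0,0,0,0,(-1),0,0]],![![0,0,0,0,0,(-1),0,0],![0,0,0,(-1),0,0,0,0],![0,0,0,0,0,0,0,0],![0,1,0,0,0,0,0,0],![0,0,0,0,0,0,0,0],![1,0,0,0,0,0,0,0],![0,0,0,0,0,0,0,(-1)],![0,0,0,0,0,0,1,0]],![![0,0,0,0,0,0,0,1],![0,0,1,0,0,0,0,0],![0,(-1),0,0,0,0,0,0],![0,0,0,0,0,0,0,0],![0,0,0,0,0,0,0,0],![0,0,0,0,0,0,1,0],![0,0,0,0,0,(-1),0,0],![(-1),0,0,0,0,0,0,0]],![![0,0,0,0,0,0,0,0]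,![0,0,0,0,0,0,0,0],![0,0,0,0,0,0,0,0],![0,0,0,0,0,0,0,0],![0,0,0,0,0,0,0,0],![0,0,0,0,0,0,0,0],![0,0,0,0,0,0,0,0],![0,0,0,0,0,0,0,0]],![![0,0,1,0,0,0,0,0],![0,0,0,0,0,0,0,(-1)],![(-1),0,0,0,0,0,0,0],![0,0,0,0,0,0,(-1),0],![0,0,0,0,0,0,0,0],![0,0,0,0,0,0,0,0],![0,0,0,1,0,0,0,0],![0,1,0,0,0,0,0,0]],![![0,1,0,0,0,0,0,0],![(-1),0,0,0,0,0,0,0],![0,0,0,0,0,0,0,1],![0,0,0,0,0,1,0,0],![0,0,0,0,0,0,0,0],![0,0,0,(-1),0,0,0,0],![0,0,0,0,0,0,0,0],![0,0,(-1),0,0,0,0,0]],![![0,0,0,(-1),0,0,0,0],![0,0,0,0,0,1,0,0],![0,0,0,0,0,0,(-1),0],![1,0,0,0,0,0,0,0],![0,0,0,0,0,0,0,0],![0,(-1),0,0,0,0,0,0],![0,0,1,0,0,0,0,0],![0,0,0,0,0,0,0,0]]],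
  ![![![0,0,0,0,0,0,0,0],![0,0,0,1,0,0,0,0],![0,0,0,0,(-1),0,0,0],![0,(-1),0,0,0,0,0,0],![0,0,1,0,0,0,0,0],![0,0,0,0,0,0,0,0],![0,0,0,0,0,0,0,1],![0,0,0,0,0,0,(-1),0]],![![0,0,0,(-1),0,0,0,0],![0,0,0,0,0,0,0,0],![0,0,0,0,0,0,(-1),0],![1,0,0,0,0,0,0,0],![0,0,0,0,0,0,0,(-1)],![0,0,0,0,0,0,0,0],![0,0,1,0,0,0,0,0],![0,0,0,0,1,0,0,0]],![![0,0,0,0,1,0,0,0],![0,0,0,0,0,0,1,0],![0,0,0,0,0,0,0,0],![0,0,0,0,0,0,0,(-1)],![(-1),0,0,0,0,0,0,0],![0,0,0,0,0,0,0,0],![0,(-1),0,0,0,0,0,0],![0,0,0,1,0,0,0,0]],![![0,1,0,0,0,0,0,0],![(-1),0,0,0,0,0,0,0],![0,0,0,0,0,0,0,1],![0,0,0,0,0,0,0,0],![0,0,0,0,0,0,(-1),0],![0,0,0,0,0,0,0,0],![0,0,0,0,1,0,0,0],![0,0,(-1),0,0,0,0,0]],![![0,0,(-1),0,0,0,0,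0],![0,0,0,0,0,0,0,1],![1,0,0,0,0,0,0,0],![0,0,0,0,0,0,1,0],![0,0,0,0,0,0,0,0],![0,0,0,0,0,0,0,0],![0,0,0,(-1),0,0,0,0],![0,(-1),0,0,0,0,0,0]],![![0,0,0,0,0,0,0,0],![0,0,0,0,0,0,0,0],![0,0,0,0,0,0,0,0],![0,0,0,0,0,0,0,0],![0,0,0,0,0,0,0,0],![0,0,0,0,0,0,0,0],![0,0,0,0,0,0,0,0],![0,0,0,0,0,0,0,0]],![![0,0,0,0,0,0,0,(-1)],![0,0,(-1),0,0,0,0,0],![0,1,0,0,0,0,0,0],![0,0,0,0,(-1),0,0,0],![0,0,0,1,0,0,0,0],![0,0,0,0,0,0,0,0],![0,0,0,0,0,0,0,0],![1,0,0,0,0,0,0,0]],![![0,0,0,0,0,0,1,0],![0,0,0,0,(-1),0,0,0],![0,0,0,(-1),0,0,0,0],![0,0,1,0,0,0,0,0],![0,1,0,0,0,0,0,0],![0,0,0,0,0,0,0,0],![(-1),0,0,0,0,0,0,0],![0,0,0,0,0,0,0,0]]],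
  ![![![0,0,0,0,0,0,0,0],![0,0,0,0,(-1),0,0,0],![0,0,0,(-1),0,0,0,0],![0,0,1,0,0,0,0,0],![0,1,0,0,0,0,0,0],![0,0,0,0,0,0,0,(-1)],![0,0,0,0,0,0,0,0],![0,0,0,0,0,1,0,0]],![![0,0,0,0,1,0,0,0],![0,0,0,0,0,0,0,0],![0,0,0,0,0,1,0,0],![0,0,0,0,0,0,0,(-1)],![(-1),0,0,0,0,0,0,0],![0,0,(-1),0,0,0,0,0],![0,0,0,0,0,0,0,0],![0,0,0,1,0,0,0,0]],![![0,0,0,1,0,0,0,0],![0,0,0,0,0,(-1),0,0],![0,0,0,0,0,0,0,0],![(-1),0,0,0,0,0,0,0],![0,0,0,0,0,0,0,1],![0,1,0,0,0,0,0,0],![0,0,0,0,0,0,0,0],![0,0,0,0,(-1),0,0,0]],![![0,0,(-1),0,0,0,0,0],![0,0,0,0,0,0,0,1],![1,0,0,0,0,0,0,0],![0,0,0,0,0,0,0,0],![0,0,0,0,0,1,0,0],![0,0,0,0,(-1),0,0,0],![0,0,0,0,0,0,0,0],![0,(-1),0,0,0,0,0,0]],![![0,(-1),0,0,0,0,0,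0],![1,0,0,0,0,0,0,0],![0,0,0,0,0,0,0,(-1)],![0,0,0,0,0,(-1),0,0],![0,0,0,0,0,0,0,0],![0,0,0,1,0,0,0,0],![0,0,0,0,0,0,0,0],![0,0,1,0,0,0,0,0]],![![0,0,0,0,0,0,0,1],![0,0,1,0,0,0,0,0],![0,(-1),0,0,0,0,0,0],![0,0,0,0,1,0,0,0],![0,0,0,(-1),0,0,0,0],![0,0,0,0,0,0,0,0],![0,0,0,0,0,0,0,0],![(-1),0,0,0,0,0,0,0]],![![0,0,0,0,0,0,0,0],![0,0,0,0,0,0,0,0],![0,0,0,0,0,0,0,0],![0,0,0,0,0,0,0,0],![0,0,0,0,0,0,0,0],![0,0,0,0,0,0,0,0],![0,0,0,0,0,0,0,0],![0,0,0,0,0,0,0,0]],![![0,0,0,0,0,(-1),0,0],![0,0,0,(-1),0,0,0,0],![0,0,0,0,1,0,0,0],![0,1,0,0,0,0,0,0],![0,0,(-1),0,0,0,0,0],![1,0,0,0,0,0,0,0],![0,0,0,0,0,0,0,0],![0,0,0,0,0,0,0,0]]],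
  ![![![0,0,0,0,0,0,0,0],![0,0,1,0,0,0,0,0],![0,(-1),0,0,0,0,0,0],![0,0,0,0,1,0,0,0],![0,0,0,(-1),0,0,0,0],![0,0,0,0,0,0,1,0],![0,0,0,0,0,(-1),0,0],![0,0,0,0,0,0,0,0]],![![0,0,(-1),0,0,0,0,0],![0,0,0,0,0,0,0,0],![1,0,0,0,0,0,0,0],![0,0,0,0,0,0,1,0],![0,0,0,0,0,1,0,0],![0,0,0,0,(-1),0,0,0],![0,0,0,(-1),0,0,0,0],![0,0,0,0,0,0,0,0]],![![0,1,0,0,0,0,0,0],![(-1),0,0,0,0,0,0,0],![0,0,0,0,0,0,0,0],![0,0,0,0,0,1,0,0],![0,0,0,0,0,0,(-1),0],![0,0,0,(-1),0,0,0,0],![0,0,0,0,1,0,0,0],![0,0,0,0,0,0,0,0]],![![0,0,0,0,(-1),0,0,0],![0,0,0,0,0,0,(-1),0],![0,0,0,0,0,(-1),0,0],![0,0,0,0,0,0,0,0],![1,0,0,0,0,0,0,0],![0,0,1,0,0,0,0,0],![0,1,0,0,0,0,0,0],![0,0,0,0,0,0,0,0]],![![0,0,0,1,0,0,0,0],![0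,0,0,0,0,(-1),0,0],![0,0,0,0,0,0,1,0],![(-1),0,0,0,0,0,0,0],![0,0,0,0,0,0,0,0],![0,1,0,0,0,0,0,0],![0,0,(-1),0,0,0,0,0],![0,0,0,0,0,0,0,0]],![![0,0,0,0,0,0,(-1),0],![0,0,0,0,1,0,0,0],![0,0,0,1,0,0,0,0],![0,0,(-1),0,0,0,0,0],![0,(-1),0,0,0,0,0,0],![0,0,0,0,0,0,0,0],![1,0,0,0,0,0,0,0],![0,0,0,0,0,0,0,0]],![![0,0,0,0,0,1,0,0],![0,0,0,1,0,0,0,0],![0,0,0,0,(-1),0,0,0],![0,(-1),0,0,0,0,0,0],![0,0,1,0,0,0,0,0],![(-1),0,0,0,0,0,0,0],![0,0,0,0,0,0,0,0],![0,0,0,0,0,0,0,0]],![![0,0,0,0,0,0,0,0],![0,0,0,0,0,0,0,0],![0,0,0,0,0,0,0,0],![0,0,0,0,0,0,0,0],![0,0,0,0,0,0,0,0],![0,0,0,0,0,0,0,0],![0,0,0,0,0,0,0,0],![0,0,0,0,0,0,0,0]]]]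



lemma wedge4_expand (a b c d i j k l : Fin 8) : wedge4 a b c d i j k l =
    kd a i * (kd b j * (kd c k * kd d l - kd c l * kd d k) - kd b k * (kd c j * kd d l - kd c l * kd d j) + kd b l * (kd c j * kd d k - kd c k * kd d j))
  - kd a j * (kd b i * (kd c k * kd d l - kd c l * kd d k) - kd b k * (kd c i * kd d l - kd c l * kd d i) + kd b l * (kd c i * kd d k - kd c k * kd d i))
  + kd a k * (kd b i * (kd c j * kd d l - kd c l * kd d j) - kd b j * (kd c i * kd d l - kd c l * kd d i) + kd b l * (kd c i * kd d j - kd c j * kd d i))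
  - kd a l * (kd b i * (kd c j * kd d k - kd c k * kd d j) - kd b j * (kd c i * kd d k - kd c k * kd d i) + kd b k * (kd c i * kd d j - kd c j * kd d i)) := by
  simp [wedge4, Matrix.det_succ_row_zero, Fin.sum_univ_succ, Fin.succAbove]
  ring

lemma kd_cast (a b : Fin 8) : kd a b = ((kdZ a b : ℤ) : ℝ) := by
  rw [kd, kdZ]; split <;> simp

lemma wedge4_cast (a b c d i j k l : Fin 8) :
    wedge4 a b c d i j k l = ((wedge4Z a b c d i j k l : ℤ) : ℝ) := by
  rw [wedge4_expand, wedge4Z]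
  push_cast [kd_cast]
  ring

lemma Phi_cast (i j k l : Fin 8) : Phi i j k l = ((PhiZ i j k l : ℤ) : ℝ) := by
  rw [Phi, PhiZ]
  push_cast [wedge4_cast]
  ring



lemma phiT_swap12 : ∀ a b c d : Fin 8, phiT b a c d = -phiT a b c d := by decide

lemma phiT_swap34 : ∀ a b c d : Fin 8, phiT a b d c = -phiT a b c d := by decide

lemma phiT_diag12 (a c d : Fin 8) : phiT a a c d = 0 := by
  have := phiT_swap12 a a c d; omega

lemma phiT_diag34 (a b c : Fin 8) : phiT a b c c = 0 := by
  have := phiT_swap34 a b c c; omega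

lemma PhiZ_swap12 (a b c d : Fin 8) : PhiZ b a c d = -PhiZ a b c d := by
  simp only [PhiZ, wedge4Z]; ring

lemma PhiZ_swap34 (a b c d : Fin 8) : PhiZ a b d c = -PhiZ a b c d := by
  simp only [PhiZ, wedge4Z]; ring

lemma PhiZ_diag12 (a c d : Fin 8) : PhiZ a a c d = 0 := by
  have := PhiZ_swap12 a a c d; omega

lemma PhiZ_diag34 (a b c : Fin 8) : PhiZ a b c c = 0 := by
  have := PhiZ_swap34 a b c c; omega

set_option maxRecDepth 100000 in
set_option maxHeartbeats 4000000 in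
lemma phiT_eq_aux : ∀ a b c d : Fin 8, a < b → c < d → phiT a b c d = PhiZ a b c d := by
  decide

lemma phiT_eq_aux2 (a b : Fin 8) (hab : a < b) : ∀ c d : Fin 8, phiT a b c d = PhiZ a b c d := by
  intro c d
  rcases lt_trichotomy c d with h | h | h
  · exact phiT_eq_aux a b c d hab h
  · subst h; rw [phiT_diag34, PhiZ_diag34]
  · have h1 := phiT_swap34 a b d c
    have h2 := PhiZ_swap34 a b d c
    have h3 := phiT_eq_aux a b d c hab h
    omega

lemma phiT_eq : ∀ a b c d : Fin 8, phiT a b c d = PhiZ a b c d := by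
  intro a b c d
  rcases lt_trichotomy a b with h | h | h
  · exact phiT_eq_aux2 a b h c d
  · subst h; rw [phiT_diag12, PhiZ_diag12]
  · have h1 := phiT_swap12 b a c d
    have h2 := PhiZ_swap12 b a c d
    have h3 := phiT_eq_aux2 b a h c d
    omega

lemma Phi_tab (i j k l : Fin 8) : Phi i j k l = ((phiT i j k l : ℤ) : ℝ) := by
  rw [Phi_cast, phiT_eq]



set_option maxRecDepth 100000 in
set_option maxHeartbeats 4000000 in
lemma keyZ_aux : ∀ a b l m : Fin 8, a < b → l < m →
    (∑ s, ∑ t, phiT a b s t * phiT s t l m)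
      = 6 * (kdZ a l * kdZ b m - kdZ a m * kdZ b l) - 4 * phiT a b l m := by
  decide

lemma sum_swap12 (a b l m : Fin 8) :
    (∑ s, ∑ t, phiT a b s t * phiT s t l m) = -∑ s, ∑ t, phiT b a s t * phiT s t l m := by
  rw [← Finset.sum_neg_distrib]
  refine Finset.sum_congr rfl fun s _ => ?_
  rw [← Finset.sum_neg_distrib]
  refine Finset.sum_congr rfl fun t _ => ?_
  rw [phiT_swap12 a b s t]; ring

lemma sum_swap34 (a b l m : Fin 8) :
    (∑ s, ∑ t, phiT a b s t * phiT s t l m) = -∑ s, ∑ t, phiT a b s t * phiT s t m l := by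
  rw [← Finset.sum_neg_distrib]
  refine Finset.sum_congr rfl fun s _ => ?_
  rw [← Finset.sum_neg_distrib]
  refine Finset.sum_congr rfl fun t _ => ?_
  rw [phiT_swap34 s t l m]; ring

lemma keyZ_aux2 (a b : Fin 8) (hab : a < b) : ∀ l m : Fin 8,
    (∑ s, ∑ t, phiT a b s t * phiT s t l m)
      = 6 * (kdZ a l * kdZ b m - kdZ a m * kdZ b l) - 4 * phiT a b l m := by
  intro l m
  rcases lt_trichotomy l m with h | h | h
  · exact keyZ_aux a b l m hab h
  · subst h
    have hz : (∑ s, ∑ t, phiT a b s t * phiT s t l l) = 0 := by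
      simp [phiT_diag34]
    rw [hz, phiT_diag34]; ring
  · rw [sum_swap34, keyZ_aux a b m l hab h, phiT_swap34 a b m l]; ring

lemma keyZ : ∀ a b l m : Fin 8,
    (∑ s, ∑ t, phiT a b s t * phiT s t l m)
      = 6 * (kdZ a l * kdZ b m - kdZ a m * kdZ b l) - 4 * phiT a b l m := by
  intro a b l m
  rcases lt_trichotomy a b with h | h | h
  · exact keyZ_aux2 a b h l m
  · subst h
    have hz : (∑ s, ∑ t, phiT a a s t * phiT s t l m) = 0 := by
      simp [phiT_diag12]
    rw [hz, phiT_diag12]; ring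
  · rw [sum_swap12, keyZ_aux2 b a h l m, phiT_swap12 a b l m]; ring

lemma contractR (a b l m : Fin 8) :
    (∑ s, ∑ t, Phi a b s t * Phi s t l m)
      = 6 * (kd a l * kd b m - kd a m * kd b l) - 4 * Phi a b l m := by
  have h := keyZ a b l m
  simp only [Phi_tab, kd_cast]
  exact_mod_cast h



/-- `contrPhi γ` is the 2-form `γ_{ab}Φ_{abij}`. -/
def contrPhi (g : Fin 8 → Fin 8 → ℝ) (l m : Fin 8) : ℝ := ∑ s, ∑ t, g s t * Phi s t l m

lemma sum_kd_right (f : Fin 8 → ℝ) (l : Fin 8) : (∑ a, f a * kd a l) = f l := by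
  simp [kd]

lemma keyR (g : Fin 8 → Fin 8 → ℝ) (hg : ∀ i j, g i j = -g j i) (l m : Fin 8) :
    contrPhi (contrPhi g) l m = 12 * g l m - 4 * contrPhi g l m := by
  have swap4 : ∀ F : Fin 8 → Fin 8 → Fin 8 → Fin 8 → ℝ,
      (∑ s, ∑ t, ∑ a, ∑ b, F s t a b) = ∑ a, ∑ b, ∑ s, ∑ t, F s t a b := by
    intro F
    calc (∑ s, ∑ t, ∑ a, ∑ b, F s t a b)
        = ∑ s, ∑ a, ∑ t, ∑ b, F s t a b := by
          refine Finset.sum_congr rfl fun s _ => ?_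
          exact Finset.sum_comm ..
      _ = ∑ a, ∑ s, ∑ t, ∑ b, F s t a b := Finset.sum_comm ..
      _ = ∑ a, ∑ s, ∑ b, ∑ t, F s t a b := by
          refine Finset.sum_congr rfl fun a _ => ?_
          refine Finset.sum_congr rfl fun s _ => ?_
          exact Finset.sum_comm ..
      _ = ∑ a, ∑ b, ∑ s, ∑ t, F s t a b := by
          refine Finset.sum_congr rfl fun a _ => ?_
          exact Finset.sum_comm ..
  have step1 : contrPhi (contrPhi g) l m
      = ∑ a, ∑ b, g a b * (∑ s, ∑ t, Phi a b s t * Phi s t l m) := by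
    unfold contrPhi
    simp only [Finset.sum_mul]
    rw [swap4 (fun s t a b => g a b * Phi a b s t * Phi s t l m)]
    refine Finset.sum_congr rfl fun a _ => ?_
    refine Finset.sum_congr rfl fun b _ => ?_
    rw [Finset.mul_sum]
    refine Finset.sum_congr rfl fun s _ => ?_
    rw [Finset.mul_sum]
    refine Finset.sum_congr rfl fun t _ => ?_
    ring
  rw [step1]
  have step2 : ∀ a b, g a b * (∑ s, ∑ t, Phi a b s t * Phi s t l m)
      = 6 * (g a b * (kd a l * kd b m)) - 6 * (g a b * (kd a m * kd b l))
        - 4 * (g a b * Phi a b l m) := by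
    intro a b; rw [contractR]; ring
  simp only [step2]
  simp only [Finset.sum_sub_distrib]
  have d1 : (∑ a, ∑ b, 6 * (g a b * (kd a l * kd b m))) = 6 * g l m := by
    simp [kd, Finset.mul_sum, mul_ite]
  have d2 : (∑ a, ∑ b, 6 * (g a b * (kd a m * kd b l))) = 6 * g m l := by
    simp [kd, Finset.mul_sum, mul_ite]
  have d3 : (∑ a, ∑ b, 4 * (g a b * Phi a b l m)) = 4 * contrPhi g l m := by
    unfold contrPhi
    simp [Finset.mul_sum]
  rw [d1, d2, d3, hg m l]
  ring

-- ### Abstract consequences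

lemma contrPhi_congr (f g : Fin 8 → Fin 8 → ℝ) (h : ∀ l m, f l m = g l m) (l m : Fin 8) :
    contrPhi f l m = contrPhi g l m := by
  unfold contrPhi
  exact Finset.sum_congr rfl fun s _ => Finset.sum_congr rfl fun t _ => by rw [h s t]

lemma contrPhi_sub2 (x y : Fin 8 → Fin 8 → ℝ) (l m : Fin 8) :
    contrPhi (fun u v => 2 * x u v - y u v) l m = 2 * contrPhi x l m - contrPhi y l m := by
  unfold contrPhi
  rw [Finset.mul_sum, ← Finset.sum_sub_distrib]
  refine Finset.sum_congr rfl fun s _ => ?_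
  rw [Finset.mul_sum, ← Finset.sum_sub_distrib]
  refine Finset.sum_congr rfl fun t _ => ?_
  ring

lemma core (β τ : Fin 8 → Fin 8 → ℝ) (hβ : ∀ i j, β i j = -β j i) (hτ : ∀ i j, τ i j = -τ j i)
    (H : ∀ l m, contrPhi β l m = 2 * τ l m - contrPhi τ l m) (i j : Fin 8) :
    β i j = -(1/3) * τ i j + (1/6) * contrPhi τ i j ∧
      β i j = -(1/6) * contrPhi β i j ∧ contrPhi β i j = -6 * β i j := by
  have a2 := keyR β hβ i j
  have a3 := keyR τ hτ i j
  have a4 : contrPhi (contrPhi β) i j = 2 * contrPhi τ i j - contrPhi (contrPhi τ) i j :=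
    (contrPhi_congr _ _ H i j).trans (contrPhi_sub2 τ (contrPhi τ) i j)
  have h1 := H i j
  refine ⟨by linarith, by linarith, by linarith⟩

lemma rearr (θ : Fin 8 → ℝ) (T : Fin 8 → Fin 8 → Fin 8 → ℝ) (l m : Fin 8) :
    (∑ p, ∑ s, ∑ t, θ p * T p s t * Phi s t l m)
      = contrPhi (fun u v => ∑ k, θ k * T k u v) l m := by
  show _ = ∑ s, ∑ t, (∑ k, θ k * T k s t) * Phi s t l m
  calc (∑ p, ∑ s, ∑ t, θ p * T p s t * Phi s t l m)
      = ∑ s, ∑ p, ∑ t, θ p * T p s t * Phi s t l m := Finset.sum_comm ..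
    _ = ∑ s, ∑ t, ∑ p, θ p * T p s t * Phi s t l m := by
        refine Finset.sum_congr rfl fun s _ => ?_
        exact Finset.sum_comm ..
    _ = ∑ s, ∑ t, (∑ k, θ k * T k s t) * Phi s t l m := by
        refine Finset.sum_congr rfl fun s _ => ?_
        refine Finset.sum_congr rfl fun t _ => ?_
        rw [Finset.sum_mul]

/-- If a 2-form `β`, a 1-form `θ` and a 3-form `T` satisfy
`β_{st}Φ_{stlm} = 2θ_kT_{klm} - θ_pT_{pst}Φ_{stlm}`, then
`β_{ij} = -(1/3)θ_sT_{sij} + (1/6)θ_sT_{sab}Φ_{abij} = -(1/6)β_{ab}Φ_{abij}`; in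
particular `β_{ab}Φ_{abij} = -6β_{ij}`, i.e. `β ∈ Λ²₇`. -/
theorem spin7_lee_two_form_in_lambda27 :
    ∀ β : Fin 8 → Fin 8 → ℝ, ∀ θ : Fin 8 → ℝ, ∀ T : Fin 8 → Fin 8 → Fin 8 → ℝ,
      (∀ i j, β i j = -β j i) →
      (∀ i j k, T i j k = -T j i k ∧ T i j k = -T i k j) →
      (∀ l m, (∑ s, ∑ t, β s t * Phi s t l m)
        = 2 * (∑ k, θ k * T k l m) - ∑ p, ∑ s, ∑ t, θ p * T p s t * Phi s t l m) →
      ∀ i j,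
        (β i j = -(1/3) * (∑ s, θ s * T s i j)
            + (1/6) * ∑ s, ∑ a, ∑ b, θ s * T s a b * Phi a b i j) ∧
        β i j = -(1/6) * ∑ a, ∑ b, β a b * Phi a b i j ∧
        (∑ a, ∑ b, β a b * Phi a b i j) = -6 * β i j := by
  intro β θ T hβ hT hyp i j
  have hτ : ∀ u v : Fin 8, (fun l m => ∑ k, θ k * T k l m) u v
      = -(fun l m => ∑ k, θ k * T k l m) v u := by
    intro u v
    show (∑ k, θ k * T k u v) = -∑ k, θ k * T k v u
    rw [← Finset.sum_neg_distrib]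
    refine Finset.sum_congr rfl fun s _ => ?_
    rw [(hT s v u).2]
    ring
  have H : ∀ l m, contrPhi β l m
      = 2 * ((fun l m => ∑ k, θ k * T k l m) l m)
        - contrPhi (fun l m => ∑ k, θ k * T k l m) l m := by
    intro l m
    have h := hyp l m
    rw [rearr θ T l m] at h
    exact h
  obtain ⟨c1, c2, c3⟩ := core β (fun l m => ∑ k, θ k * T k l m) hβ hτ H i j
  refine ⟨?_, ?_, ?_⟩
  · rw [rearr θ T i j]
    simpa using c1
  · rw [show (∑ a, ∑ b, β a b * Phi a b i j) = contrPhi β i j from rfl]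
    exact c2
  · rw [show (∑ a, ∑ b, β a b * Phi a b i j) = contrPhi β i j from rfl]
    exact c3
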